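/- arXiv:1011.3856 — 2 statements merged into one kernel-verified Lean document; each statement's English description precedes it below -/
import Mathlib

section
/- Let F : ℂ → ℂ be an entire function satisfying F(s+1) = F(s) for all s ∈ ℂ, and suppose F(s) = o(exp(2π|Im(s)|)) as |Im(s)| → ∞, i.e., for every ε > 0 there exists T > 0 such that |F(s)| ≤ ε·exp(2π|Im(s)|) whenever |Im(s)| ≥ T. Then F is constant. -/
/-!
Write `F s = G (exp (2πi s))` with `G` the cusp function of `F`; it is holomorphic on `ℂ \ {0}`,
and since `|exp (2πi s)| = exp (-2π Im s)` the growth bound says `G q = o(1/|q|)` as `q → 0` and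
`G q = o(|q|)` as `q → ∞`. The first makes `0` a removable singularity of `G`; then
`(G q - G 0) / q` is entire and tends to `0` at infinity, so it vanishes by Liouville's theorem.
-/

open Complex Filter Asymptotics Topology Set Function Function.Periodic

open scoped Real

local notation "I∞" => comap im atTop
local notation "𝕢" => qParam

variable {E : Type*} [NormedAddCommGroup E] [NormedSpace ℂ E] [CompleteSpace E]

theorem Differentiable.apply_eq_apply_zero_of_isLittleO_cocompact {f : ℂ → E}
    (hf : Differentiable ℂ f) (ho : f =o[cocompact ℂ] id) (z : ℂ) : f z = f 0 := by
  have hslope : Tendsto (dslope f 0) (cocompact ℂ) (𝓝 0) := by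
    have hsub : (fun w => f w - f 0) =o[cocompact ℂ] id :=
      ho.sub (isLittleO_const_left.2 (.inr tendsto_norm_cocompact_atTop))
    refine hsub.tendsto_inv_smul_nhds_zero.congr' ?_
    filter_upwards [(isCompact_singleton (x := (0 : ℂ))).compl_mem_cocompact] with w hw
    simp [dslope_of_ne _ hw, slope_def_module]
  have hdslope : Differentiable ℂ (dslope f 0) := fun w =>
    ((differentiableOn_dslope univ_mem).2 hf.differentiableOn).differentiableAt univ_mem
  rcases eq_or_ne z 0 with rfl | hz
  · rfl
  have h0 := hdslope.apply_eq_of_tendsto_cocompact z hslope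
  simpa [dslope_of_ne _ hz, slope_def_module, hz, sub_eq_zero] using h0

theorem exists_eqOn_compl_zero_const_of_isLittleO {g : ℂ → E}
    (hg : DifferentiableOn ℂ g {0}ᶜ) (h_zero : g =o[𝓝[≠] 0] fun q => q⁻¹)
    (h_inf : g =o[cocompact ℂ] id) : ∃ c, EqOn g (fun _ => c) {0}ᶜ := by
  set g' := update g 0 (limUnder (𝓝[≠] 0) g)
  have hg' : Differentiable ℂ g' := by
    refine fun q => (differentiableOn_update_limUnder_of_isLittleO univ_mem ?_ ?_).differentiableAt
      univ_mem
    · simpa [compl_eq_univ_sdiff] using hg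
    · simpa using h_zero.sub (isLittleO_const_left.2 (.inr tendsto_norm_inv_nhdsNE_zero_atTop))
  have hg_inf : g' =o[cocompact ℂ] id := by
    refine h_inf.congr' ?_ EventuallyEq.rfl
    filter_upwards [(isCompact_singleton (x := (0 : ℂ))).compl_mem_cocompact] with q hq
    exact (update_of_ne hq ..).symm
  refine ⟨g' 0, fun q hq => ?_⟩
  rw [← hg'.apply_eq_apply_zero_of_isLittleO_cocompact hg_inf q]
  exact (update_of_ne hq ..).symm

namespace Function.Periodic

variable {h : ℝ} {f : ℂ → ℂ}

theorem differentiableOn_cuspFunction (hh : h ≠ 0) (hf : Periodic f h) (hd : Differentiable ℂ f) :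
    DifferentiableOn ℂ (cuspFunction h f) {0}ᶜ := fun _ hq =>
  (qParam_right_inv hh hq ▸ differentiableAt_cuspFunction hh hf (hd _)).differentiableWithinAt

theorem tendsto_invQParam_cocompact (hh : 0 < h) :
    Tendsto (invQParam h) (cocompact ℂ) (comap im atBot) := by
  rw [tendsto_comap_iff, show im ∘ invQParam h = fun q => -h / (2 * π) * Real.log ‖q‖ from
    funext (im_invQParam h)]
  exact (Real.tendsto_log_atTop.comp tendsto_norm_cocompact_atTop).const_mul_atTop_of_neg
    (div_neg_of_neg_of_pos (neg_neg_of_pos hh) Real.two_pi_pos)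

theorem cuspFunction_isLittleO_inv_nhdsNE_zero (hh : 0 < h)
    (ho : f =o[I∞] fun z => (𝕢 h z)⁻¹) : cuspFunction h f =o[𝓝[≠] 0] fun q => q⁻¹ := by
  refine (ho.comp_tendsto (invQParam_tendsto hh)).congr' ?_ ?_ <;>
    filter_upwards [self_mem_nhdsWithin] with _ hq
  · exact (cuspFunction_eq_of_nonzero h f hq).symm
  · simp only [comp_apply, qParam_right_inv hh.ne' hq]

theorem cuspFunction_isLittleO_id_cocompact (hh : 0 < h)
    (ho : f =o[comap im atBot] 𝕢 h) : cuspFunction h f =o[cocompact ℂ] id := by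
  refine (ho.comp_tendsto (tendsto_invQParam_cocompact hh)).congr' ?_ ?_ <;>
    filter_upwards [(isCompact_singleton (x := (0 : ℂ))).compl_mem_cocompact] with q hq
  · exact (cuspFunction_eq_of_nonzero h f hq).symm
  · exact qParam_right_inv hh.ne' hq

end Function.Periodic

/-- Liouville-type lemma: an entire function with period 1 which is
`o(exp(2π|Im s|))` as `|Im s| → ∞` is constant. -/
theorem stmt_7 (F : ℂ → ℂ) (hF : Differentiable ℂ F)
    (hper : ∀ s : ℂ, F (s + 1) = F s)
    (hgrowth : ∀ ε : ℝ, 0 < ε → ∃ T : ℝ, 0 < T ∧ ∀ s : ℂ, T ≤ |s.im| →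
      ‖F s‖ ≤ ε * Real.exp (2 * Real.pi * |s.im|)) :
    ∃ c : ℂ, ∀ s : ℂ, F s = c := by
  have hper' : Periodic F ((1 : ℝ) : ℂ) := by simpa using hper
  have ho : F =o[comap im atBot ⊔ I∞] fun s => Real.exp (2 * π * |s.im|) := by
    rw [← comap_sup, ← comap_abs_atTop, comap_comap]
    refine isLittleO_iff.2 fun ε hε => ?_
    obtain ⟨T, -, hT⟩ := hgrowth ε hε
    exact mem_comap.2 ⟨Ici T, Ici_mem_atTop T, fun s hs => by simpa using hT s hs⟩
  obtain ⟨hbot, htop⟩ := isLittleO_sup.1 ho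
  have hbot' : F =o[comap im atBot] 𝕢 1 := by
    refine (hbot.congr' .rfl ?_).of_norm_right
    filter_upwards [preimage_mem_comap (Iic_mem_atBot 0)] with s (hs : s.im ≤ 0)
    simp [norm_qParam, abs_of_nonpos hs]
  have htop' : F =o[I∞] fun s => (𝕢 1 s)⁻¹ := by
    refine (htop.congr' .rfl ?_).of_norm_right
    filter_upwards [preimage_mem_comap (Ici_mem_atTop 0)] with s (hs : 0 ≤ s.im)
    simp [norm_qParam, abs_of_nonneg hs, ← Real.exp_neg]
  obtain ⟨c, hc⟩ := exists_eqOn_compl_zero_const_of_isLittleO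
    (differentiableOn_cuspFunction one_ne_zero hper' hF)
    (cuspFunction_isLittleO_inv_nhdsNE_zero one_pos htop')
    (cuspFunction_isLittleO_id_cocompact one_pos hbot')
  exact ⟨c, fun s => eq_cuspFunction one_ne_zero hper' s ▸ hc (qParam_ne_zero s)⟩
end

section
/- Let q > 0 and A > 0 be real numbers, let K, K̂, J, Ĵ ≥ 0 be integers, m_1,…,m_J and m̂_1,…,m̂_Ĵ positive integers, and ζ_1,…,ζ_K, ζ̂_1,…,ζ̂_K̂, ρ_1,…,ρ_J, ρ̂_1,…,ρ̂_Ĵ complex numbers, all with strictly positive real part. Let ψ : ℂ → ℂ be a function such that for every s ∈ ℂ with ∏_{j=1}^J (ρ_j − s)^{m_j} · ∏_{j=1}^{Ĵ} (ρ̂_j + s)^{m̂_j} ≠ 0 one has (q − ψ(s)) · ∏_{j=1}^J (ρ_j − s)^{m_j} · ∏_{j=1}^{Ĵ} (ρ̂_j + s)^{m̂_j} = A · ∏_{j=1}^K (ζ_j − s) · ∏_{j=1}^{K̂} (ζ̂_j + s). Define f(s) = A^{1−s} · Γ(s) · 𝒢(s)/𝒢(1), where A^{1−s} = exp((1−s)·ln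 A). Then f(1) = 1, and for every s with Re(s) > 0 such that none of ζ_j − s, 1+ζ_j−s, ρ̂_j+s, ρ_j−s, 1+ρ_j−s, ζ̂_j+s is a nonpositive integer, one has f(s+1)·(q − ψ(s)) = s·f(s). -/
open Finset

private lemma aux_frac11 (E Γs G1v A Z Zh P Ph Gζ Gρh Gρ Gζh s : ℂ)
    (hA : A ≠ 0) (hG1 : G1v ≠ 0) (hZh : Zh ≠ 0) (hP : P ≠ 0) (hPh : Ph ≠ 0)
    (hGρ : Gρ ≠ 0) (hGζh : Gζh ≠ 0) :
    E / A * (s * Γs) * ((Gζ * (Ph * Gρh)) / (Gρ * (Zh * Gζh))) / G1v * (A * (Z * Zh) / (P * Ph)) =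
    s * (E * Γs * ((Z * Gζ * Gρh) / (P * Gρ * Gζh)) / G1v) := by
  simp only [div_mul_eq_mul_div, mul_div_assoc', div_div]
  rw [div_eq_div_iff
    (mul_ne_zero (mul_ne_zero (mul_ne_zero hA (mul_ne_zero hGρ (mul_ne_zero hZh hGζh))) hG1)
      (mul_ne_zero hP hPh))
    (mul_ne_zero (mul_ne_zero (mul_ne_zero hP hGρ) hGζh) hG1)]
  ring




/-- Verification of condition (ii) in the proof of Theorem 1: if
`(q - ψ(s)) ∏(ρⱼ-s)^mⱼ ∏(ρ̂ⱼ+s)^m̂ⱼ = A ∏(ζⱼ-s) ∏(ζ̂ⱼ+s)` away from the poles, then the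
candidate Mellin transform `f(s) = A^{1-s} Γ(s) 𝒢(s)/𝒢(1)` satisfies `f(1) = 1` and the
functional equation `f(s+1)(q - ψ(s)) = s f(s)` on `Re s > 0` away from the exceptional
points. -/
theorem stmt_11 (q A : ℝ) (hq : 0 < q) (hA : 0 < A)
    (K Kh J Jh : ℕ) (m : Fin J → ℕ) (mh : Fin Jh → ℕ)
    (hm : ∀ j, 0 < m j) (hmh : ∀ j, 0 < mh j)
    (ζ : Fin K → ℂ) (ζh : Fin Kh → ℂ) (ρ : Fin J → ℂ) (ρh : Fin Jh → ℂ)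
    (hζre : ∀ j, 0 < (ζ j).re) (hζhre : ∀ j, 0 < (ζh j).re)
    (hρre : ∀ j, 0 < (ρ j).re) (hρhre : ∀ j, 0 < (ρh j).re)
    (ψ : ℂ → ℂ)
    (hψ : ∀ s : ℂ, (∏ j, (ρ j - s) ^ (m j)) * (∏ j, (ρh j + s) ^ (mh j)) ≠ 0 →
      ((q : ℂ) - ψ s) * ((∏ j, (ρ j - s) ^ (m j)) * (∏ j, (ρh j + s) ^ (mh j))) =
        (A : ℂ) * ((∏ j, (ζ j - s)) * (∏ j, (ζh j + s))))
    (G : ℂ → ℂ)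
    (hG : ∀ s : ℂ, G s =
      ((∏ j, Complex.Gamma (1 + ζ j - s)) * ∏ j, Complex.Gamma (ρh j + s) ^ (mh j)) /
      ((∏ j, Complex.Gamma (1 + ρ j - s) ^ (m j)) * ∏ j, Complex.Gamma (ζh j + s)))
    (f : ℂ → ℂ)
    (hf : ∀ s : ℂ, f s = Complex.exp ((1 - s) * (Real.log A : ℂ)) * Complex.Gamma s * G s / G 1) :
    f 1 = 1 ∧
    ∀ s : ℂ, 0 < s.re →
      (∀ j, ∀ n : ℕ, ζ j - s ≠ -(n : ℂ)) →
      (∀ j, ∀ n : ℕ, 1 + ζ j - s ≠ -(n : ℂ)) →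
      (∀ j, ∀ n : ℕ, ρh j + s ≠ -(n : ℂ)) →
      (∀ j, ∀ n : ℕ, ρ j - s ≠ -(n : ℂ)) →
      (∀ j, ∀ n : ℕ, 1 + ρ j - s ≠ -(n : ℂ)) →
      (∀ j, ∀ n : ℕ, ζh j + s ≠ -(n : ℂ)) →
      f (s + 1) * ((q : ℂ) - ψ s) = s * f s := by
  have hA0 : (A : ℂ) ≠ 0 := by exact_mod_cast hA.ne'
  have hexpA : Complex.exp ((Real.log A : ℂ)) = (A : ℂ) := by
    rw [← Complex.ofReal_exp, Real.exp_log hA]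
  have hG1 : G 1 ≠ 0 := by
    rw [hG]
    apply div_ne_zero <;> apply mul_ne_zero <;>
      refine Finset.prod_ne_zero_iff.mpr fun j _ => ?_
    · exact Complex.Gamma_ne_zero_of_re_pos (by simpa using hζre j)
    · exact pow_ne_zero _ (Complex.Gamma_ne_zero_of_re_pos (by simp [Complex.add_re]; linarith [hρhre j]))
    · exact pow_ne_zero _ (Complex.Gamma_ne_zero_of_re_pos (by simpa using hρre j))
    · exact Complex.Gamma_ne_zero_of_re_pos (by simp [Complex.add_re]; linarith [hζhre j])
  constructor
  · rw [hf]
    simp [Complex.Gamma_one, div_self hG1]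
  · intro s hs h1 h2 h3 h4 h5 h6
    have hs0 : s ≠ 0 := by
      intro h; rw [h] at hs; simp at hs
    -- nonzeroness of factors
    have hZne : ∀ j, ζ j - s ≠ 0 := fun j => by simpa using h1 j 0
    have hPne : ∀ j, ρ j - s ≠ 0 := fun j => by simpa using h4 j 0
    have hPhne : ∀ j, ρh j + s ≠ 0 := fun j => by simpa using h3 j 0
    have hZhne : ∀ j, ζh j + s ≠ 0 := fun j => by simpa using h6 j 0
    set Z := ∏ j, (ζ j - s) with hZ
    set Zh := ∏ j, (ζh j + s) with hZh
    set P := ∏ j, (ρ j - s) ^ (m j) with hP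
    set Ph := ∏ j, (ρh j + s) ^ (mh j) with hPh
    set Gζ := ∏ j, Complex.Gamma (ζ j - s) with hGζ
    set Gρh := ∏ j, Complex.Gamma (ρh j + s) ^ (mh j) with hGρh
    set Gρ := ∏ j, Complex.Gamma (ρ j - s) ^ (m j) with hGρ
    set Gζh := ∏ j, Complex.Gamma (ζh j + s) with hGζh
    have hZ0 : Z ≠ 0 := Finset.prod_ne_zero_iff.mpr fun j _ => hZne j
    have hZh0 : Zh ≠ 0 := Finset.prod_ne_zero_iff.mpr fun j _ => hZhne j
    have hP0 : P ≠ 0 := Finset.prod_ne_zero_iff.mpr fun j _ => pow_ne_zero _ (hPne j)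
    have hPh0 : Ph ≠ 0 := Finset.prod_ne_zero_iff.mpr fun j _ => pow_ne_zero _ (hPhne j)
    have hGζ0 : Gζ ≠ 0 := Finset.prod_ne_zero_iff.mpr fun j _ => Complex.Gamma_ne_zero (h1 j)
    have hGρh0 : Gρh ≠ 0 := Finset.prod_ne_zero_iff.mpr fun j _ =>
      pow_ne_zero _ (Complex.Gamma_ne_zero (h3 j))
    have hGρ0 : Gρ ≠ 0 := Finset.prod_ne_zero_iff.mpr fun j _ =>
      pow_ne_zero _ (Complex.Gamma_ne_zero (h4 j))
    have hGζh0 : Gζh ≠ 0 := Finset.prod_ne_zero_iff.mpr fun j _ => Complex.Gamma_ne_zero (h6 j)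
    -- G s
    have hGs : G s = (Z * Gζ * Gρh) / (P * Gρ * Gζh) := by
      rw [hG]
      have e1 : ∏ j, Complex.Gamma (1 + ζ j - s) = Z * Gζ := by
        rw [hZ, hGζ, ← Finset.prod_mul_distrib]
        refine Finset.prod_congr rfl fun j _ => ?_
        rw [show (1 : ℂ) + ζ j - s = (ζ j - s) + 1 by ring,
          Complex.Gamma_add_one _ (hZne j)]
      have e2 : ∏ j, Complex.Gamma (1 + ρ j - s) ^ (m j) = P * Gρ := by
        rw [hP, hGρ, ← Finset.prod_mul_distrib]
        refine Finset.prod_congr rfl fun j _ => ?_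
        rw [show (1 : ℂ) + ρ j - s = (ρ j - s) + 1 by ring,
          Complex.Gamma_add_one _ (hPne j), mul_pow]
      rw [e1, e2]
    -- G (s+1)
    have hGs1 : G (s + 1) = (Gζ * (Ph * Gρh)) / (Gρ * (Zh * Gζh)) := by
      rw [hG]
      have e1 : ∏ j, Complex.Gamma (1 + ζ j - (s + 1)) = Gζ := by
        refine Finset.prod_congr rfl fun j _ => ?_
        congr 1; ring
      have e2 : ∏ j, Complex.Gamma (ρh j + (s + 1)) ^ (mh j) = Ph * Gρh := by
        rw [hPh, hGρh, ← Finset.prod_mul_distrib]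
        refine Finset.prod_congr rfl fun j _ => ?_
        rw [show ρh j + (s + 1) = (ρh j + s) + 1 by ring,
          Complex.Gamma_add_one _ (hPhne j), mul_pow]
      have e3 : ∏ j, Complex.Gamma (1 + ρ j - (s + 1)) ^ (m j) = Gρ := by
        refine Finset.prod_congr rfl fun j _ => ?_
        congr 2; ring
      have e4 : ∏ j, Complex.Gamma (ζh j + (s + 1)) = Zh * Gζh := by
        rw [hZh, hGζh, ← Finset.prod_mul_distrib]
        refine Finset.prod_congr rfl fun j _ => ?_
        rw [show ζh j + (s + 1) = (ζh j + s) + 1 by ring,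
          Complex.Gamma_add_one _ (hZhne j)]
      rw [e1, e2, e3, e4]
    have hkey := hψ s (mul_ne_zero hP0 hPh0)
    rw [← hP, ← hPh, ← hZ, ← hZh] at hkey
    -- exp identity
    have hexp : Complex.exp ((1 - (s + 1)) * (Real.log A : ℂ)) =
        Complex.exp ((1 - s) * (Real.log A : ℂ)) / (A : ℂ) := by
      rw [eq_div_iff hA0, ← hexpA, ← Complex.exp_add]
      congr 1; ring
    rw [hf (s + 1), hf s, hGs1, hGs, Complex.Gamma_add_one s hs0, hexp]
    have hGamma0 : Complex.Gamma s ≠ 0 := Complex.Gamma_ne_zero_of_re_pos hs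
    have hqψ : (q : ℂ) - ψ s = (A : ℂ) * (Z * Zh) / (P * Ph) := by
      rw [eq_div_iff (mul_ne_zero hP0 hPh0)]
      linear_combination hkey
    rw [hqψ]
    exact aux_frac11 _ _ _ _ _ _ _ _ _ _ _ _ _ hA0 hG1 hZh0 hP0 hPh0 hGρ0 hGζh0
end
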